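/- arXiv:2001.03040 — 3 statements merged into one kernel-verified Lean document; each statement's English description precedes it below -/
import Mathlib

section
/- For any N, L, d ∈ ℕ+, set K = ⌊N^{1/d}⌋²·⌊L^{2/d}⌋. Then for any δ ∈ (0, 1/(3K)], there exists a function φ : ℝ → ℝ implemented by a ReLU FNN with width at most 4⌊N^{1/d}⌋ + 3 and depth at most 4L + 5 such that φ(x) = k for every x ∈ [k/K, (k+1)/K − δ·1_{{k ≤ K−2}}] and every k ∈ {0, 1, …, K−1} (here the indicator 1_{{k ≤ K−2}} equals 1 if k ≤ K−2 and 0 if k = K−1). -/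
open Real

noncomputable section

/-- `A` is an affine map from `ℝ^m` to `ℝ^n`. -/
def IsAffineMap (m n : ℕ) (A : (Fin m → ℝ) → (Fin n → ℝ)) : Prop :=
  ∃ (M : Matrix (Fin n) (Fin m) ℝ) (b : Fin n → ℝ), ∀ x, A x = M.mulVec x + b

/-- `φ : ℝ^d → ℝ` is realized by a ReLU network with exactly `L'` hidden layers,
each of positive width at most `W`. -/
def ReLUNetRec (W : ℝ) : ℕ → ∀ d : ℕ, ((Fin d → ℝ) → ℝ) → Prop
  | 0, d, φ => ∃ A : (Fin d → ℝ) → (Fin 1 → ℝ), IsAffineMap d 1 A ∧ ∀ x, φ x = A x 0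
  | L' + 1, d, φ => ∃ n : ℕ, 0 < n ∧ (n : ℝ) ≤ W ∧
      ∃ A : (Fin d → ℝ) → (Fin n → ℝ), IsAffineMap d n A ∧
        ∃ ψ : (Fin n → ℝ) → ℝ, ReLUNetRec W L' n ψ ∧
          ∀ x, φ x = ψ (fun i => max (A x i) 0)

/-- `φ : ℝ^d → ℝ` is implemented by a ReLU FNN with width at most `W` and depth at most `D`. -/
def ImplementedBy (d : ℕ) (W D : ℝ) (φ : (Fin d → ℝ) → ℝ) : Prop :=
  ∃ L' : ℕ, (L' : ℝ) ≤ D ∧ ReLUNetRec W L' d φ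

/-- one-dimensional-input version of `ImplementedBy`. -/
def ImplementedBy1 (W D : ℝ) (φ : ℝ → ℝ) : Prop :=
  ImplementedBy 1 W D (fun x => φ (x 0))

/-- two-dimensional-input version of `ImplementedBy`. -/
def ImplementedBy2 (W D : ℝ) (φ : ℝ → ℝ → ℝ) : Prop :=
  ImplementedBy 2 W D (fun x => φ (x 0) (x 1))

/-!
Rescale the input by `K = M²T` (with `M = ⌊N^{1/d}⌋`, `T = ⌊L^{2/d}⌋`) and clamp it at `K - 1`:
on the `k`-th interval of the statement this gives a number `z ∈ [k, k + 1 - ε]`, `ε = Kδ ≤ 1`.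
The integer `k` is then read off digit by digit in the mixed radix `(MT, T, 2^(p-1), …, 2, 1)`,
where `T ≤ L² ≤ 2^p` for `p = 2L`. A digit costs one hidden layer: the neurons
`(z - jw + ε)₊ - (z - jw)₊`, `1 ≤ j ≤ m`, divided by `ε`, are exactly `0` or `1` on the
intervals `[r, r + 1 - ε]`, so their sum is the digit `⌊r / w⌋`; the layer subtracts `w` times
it from `z` and adds it to an accumulator `s`, and passes `z, s ≥ 0` through the ReLU unchanged.
The two base-`M` digits need width `2M`, the binary ones width `4`, and the depth is `2L + 3`.
-/

open Matrix

theorem IsAffineMap.comp {a b c : ℕ} {A : (Fin b → ℝ) → Fin c → ℝ} {B : (Fin a → ℝ) → Fin b → ℝ}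
    (hA : IsAffineMap b c A) (hB : IsAffineMap a b B) : IsAffineMap a c (A ∘ B) := by
  obtain ⟨M₁, b₁, h₁⟩ := hA
  obtain ⟨M₂, b₂, h₂⟩ := hB
  refine ⟨M₁ * M₂, M₁ *ᵥ b₂ + b₁, fun x => ?_⟩
  rw [Function.comp_apply, h₂, h₁, mulVec_add, mulVec_mulVec, add_assoc]

namespace ReLUNetRec

variable {W : ℝ}

theorem comp_affine {L' d n : ℕ} {ψ : (Fin n → ℝ) → ℝ} {B : (Fin d → ℝ) → Fin n → ℝ}
    (hψ : ReLUNetRec W L' n ψ) (hB : IsAffineMap d n B) : ReLUNetRec W L' d (ψ ∘ B) := by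
  cases L' with
  | zero =>
    obtain ⟨A, hA, hψA⟩ := hψ
    exact ⟨A ∘ B, hA.comp hB, fun x => hψA (B x)⟩
  | succ L' =>
    obtain ⟨n', hn', hW, A, hA, ψ', hψ', hψA⟩ := hψ
    exact ⟨n', hn', hW, A ∘ B, hA.comp hB, ψ', hψ', fun x => hψA (B x)⟩

theorem coord {d : ℕ} (i : Fin d) : ReLUNetRec W 0 d (fun x => x i) :=
  ⟨fun x _ => x i, ⟨of fun _ => Pi.single i 1, 0, fun x => by
    ext; simp [mulVec, dotProduct, Pi.single_apply]⟩, fun _ => rfl⟩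

theorem relu_layer {L' d e : ℕ} {ι : Type*} [Fintype ι] [Nonempty ι]
    (hW : (Fintype.card ι : ℝ) ≤ W) (M : Matrix ι (Fin d) ℝ) (b : ι → ℝ)
    (N : Matrix (Fin e) ι ℝ) (c : Fin e → ℝ) {g : (Fin e → ℝ) → ℝ}
    (hg : ReLUNetRec W L' e g) :
    ReLUNetRec W (L' + 1) d (fun x => g (N *ᵥ (fun i => max ((M *ᵥ x + b) i) 0) + c)) := by
  let σ := Fintype.equivFin ι
  have hN : IsAffineMap (Fintype.card ι) e (fun u => N *ᵥ (u ∘ σ) + c) :=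
    ⟨N.submatrix id σ.symm, c, fun u => by rw [submatrix_mulVec_equiv]; rfl⟩
  refine ⟨Fintype.card ι, Fintype.card_pos, hW, fun x => (M *ᵥ x + b) ∘ σ.symm,
    ⟨M.submatrix σ.symm id, b ∘ σ.symm, fun x => ?_⟩, _, hg.comp_affine hN, fun x => ?_⟩
  · rfl
  · simp only [Function.comp_def, Equiv.symm_apply_apply]

end ReLUNetRec

namespace ReLUStep

open Finset Set

def ramp (ε t z : ℝ) : ℝ := (max (z - t + ε) 0 - max (z - t) 0) / ε

def rampCount (ε : ℝ) (w m : ℕ) (z : ℝ) : ℝ :=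
  ∑ j ∈ range m, ramp ε ((j + 1) * w) z

def digitLayer (ε : ℝ) (w m : ℕ) (f : ℝ → ℝ → ℝ) (z s : ℝ) : ℝ :=
  f (max z 0 - w * rampCount ε w m z) (max s 0 + w * rampCount ε w m z)

def binaryDigits (ε : ℝ) : ℕ → ℝ → ℝ → ℝ
  | 0 => fun _ s => s
  | p + 1 => digitLayer ε (2 ^ p) 1 (binaryDigits ε p)

def digitNet (ε : ℝ) (M T p : ℕ) : ℝ → ℝ → ℝ :=
  digitLayer ε (M * T) (M - 1) (digitLayer ε T (M - 1) (binaryDigits ε p))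

def stepNet (δ : ℝ) (M T p : ℕ) (x : ℝ) : ℝ :=
  let K : ℝ := (M ^ 2 * T : ℕ)
  digitNet (K * δ) M T p (K - 1 - max (K - 1 - K * x) 0) 0

variable {ε : ℝ}

theorem ramp_of_le {t z : ℝ} (hε : 0 < ε) (h : t ≤ z) : ramp ε t z = 1 := by
  rw [ramp, max_eq_left (by linarith), max_eq_left (by linarith)]
  field_simp
  ring

theorem ramp_of_le_sub {t z : ℝ} (hε : 0 ≤ ε) (h : z ≤ t - ε) : ramp ε t z = 0 := by
  rw [ramp, max_eq_right (by linarith), max_eq_right (by linarith), sub_self, zero_div]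

theorem rampCount_eq {w m r : ℕ} {z : ℝ} (hε : 0 < ε) (hw : 0 < w) (hrm : r / w ≤ m)
    (hz : z ∈ Icc (r : ℝ) (r + 1 - ε)) : rampCount ε w m z = (r / w : ℕ) := by
  have hramp : ∀ j ∈ range m, ramp ε ((j + 1) * w) z = if j < r / w then 1 else 0 := by
    intro j _
    split_ifs with hj
    · have : (j + 1) * w ≤ r := (Nat.le_div_iff_mul_le hw).mp hj
      exact ramp_of_le hε (le_trans (by exact_mod_cast this) hz.1)
    · have hr : r + 1 ≤ (j + 1) * w := by
        rw [Nat.succ_le_iff, ← Nat.div_lt_iff_lt_mul hw]; omega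
      have : (r : ℝ) + 1 ≤ (j + 1) * w := by exact_mod_cast hr
      exact ramp_of_le_sub hε.le (by linarith [hz.2])
  rw [rampCount, sum_congr rfl hramp, sum_boole,
    show (range m).filter (· < r / w) = range (r / w) by ext; simp; omega, card_range]

theorem digitLayer_eq (f : ℝ → ℝ → ℝ) {w m r : ℕ} {z s : ℝ} (hε : 0 < ε) (hw : 0 < w)
    (hrm : r / w ≤ m) (hz : z ∈ Icc (r : ℝ) (r + 1 - ε)) (hs : 0 ≤ s) :
    digitLayer ε w m f z s = f (z - w * (r / w : ℕ)) (s + w * (r / w : ℕ)) := by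
  have hz0 : 0 ≤ z := le_trans (Nat.cast_nonneg r) hz.1
  rw [digitLayer, rampCount_eq hε hw hrm hz, max_eq_left hz0, max_eq_left hs]

theorem sub_mul_div_mem_Icc_mod {w r : ℕ} {z : ℝ} (hz : z ∈ Icc (r : ℝ) (r + 1 - ε)) :
    z - w * (r / w : ℕ) ∈ Icc ((r % w : ℕ) : ℝ) ((r % w : ℕ) + 1 - ε) := by
  have hr : (w : ℝ) * (r / w : ℕ) + (r % w : ℕ) = r := by exact_mod_cast Nat.div_add_mod r w
  constructor <;> linarith [hz.1, hz.2]

theorem binaryDigits_eq (hε : 0 < ε) {p r : ℕ} {z s : ℝ} (hr : r < 2 ^ p)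
    (hz : z ∈ Icc (r : ℝ) (r + 1 - ε)) (hs : 0 ≤ s) : binaryDigits ε p z s = s + r := by
  induction p generalizing r z s with
  | zero => simp_all [binaryDigits]
  | succ p ih =>
    have hp : 0 < 2 ^ p := by positivity
    have hrp : r / 2 ^ p ≤ 1 := by
      rw [Nat.le_iff_lt_add_one, Nat.div_lt_iff_lt_mul hp]; omega
    have hr' : ((2 ^ p * (r / 2 ^ p) + r % 2 ^ p : ℕ) : ℝ) = r := by rw [Nat.div_add_mod]
    rw [binaryDigits, digitLayer_eq _ hε hp hrp hz hs,
      ih (Nat.mod_lt r hp) (sub_mul_div_mem_Icc_mod hz) (by positivity), ← hr']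
    push_cast
    ring

theorem digitNet_eq (hε : 0 < ε) {M T p k : ℕ} (hT : 0 < T) (hTp : T ≤ 2 ^ p)
    (hk : k < M ^ 2 * T) {z : ℝ} (hz : z ∈ Icc (k : ℝ) (k + 1 - ε)) :
    digitNet ε M T p z 0 = k := by
  have hM : 0 < M := Nat.pos_of_ne_zero (by rintro rfl; simp at hk)
  have hMT : 0 < M * T := Nat.mul_pos hM hT
  have hkM : k / (M * T) ≤ M - 1 := by
    rw [Nat.le_sub_one_iff_lt hM, Nat.div_lt_iff_lt_mul hMT]
    linarith [hk]
  set r := k % (M * T)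
  have hrM : r / T ≤ M - 1 := by
    rw [Nat.le_sub_one_iff_lt hM, Nat.div_lt_iff_lt_mul hT]
    exact Nat.mod_lt k hMT
  have hz₁ := sub_mul_div_mem_Icc_mod (w := M * T) hz
  have hk' : ((M * T * (k / (M * T)) + r : ℕ) : ℝ) = k := by rw [Nat.div_add_mod]
  have hr' : ((T * (r / T) + r % T : ℕ) : ℝ) = r := by rw [Nat.div_add_mod]
  rw [digitNet, digitLayer_eq _ hε hMT hkM hz le_rfl,
    digitLayer_eq _ hε hT hrM hz₁ (by positivity),
    binaryDigits_eq hε ((Nat.mod_lt r hT).trans_le hTp) (sub_mul_div_mem_Icc_mod hz₁)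
      (by positivity)]
  push_cast at hk' hr' ⊢
  linarith

theorem clamp_mem_Icc {K k : ℕ} (hk : k < K) (hε₀ : 0 ≤ ε) (hε₁ : ε ≤ 1) {y : ℝ}
    (hy : y ∈ Icc (k : ℝ) (k + 1 - if k + 2 ≤ K then ε else 0)) :
    (K : ℝ) - 1 - max (K - 1 - y) 0 ∈ Icc (k : ℝ) (k + 1 - ε) := by
  split_ifs at hy with hkK
  · have : (k : ℝ) + 2 ≤ K := by exact_mod_cast hkK
    rw [max_eq_left (by linarith [hy.2])]
    simpa using hy
  · have : (k : ℝ) + 1 = K := by exact_mod_cast (by omega : k + 1 = K)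
    rw [max_eq_right (by linarith [hy.1])]
    constructor <;> linarith

theorem stepNet_eq {δ : ℝ} {M T p k : ℕ} (hδ₀ : 0 < δ) (hδ₁ : δ ≤ 1 / (M ^ 2 * T : ℕ))
    (hT : 0 < T) (hTp : T ≤ 2 ^ p) (hk : k < M ^ 2 * T) {x : ℝ}
    (hx : x ∈ Icc ((k : ℝ) / (M ^ 2 * T : ℕ))
      ((k + 1) / (M ^ 2 * T : ℕ) - if k + 2 ≤ M ^ 2 * T then δ else 0)) :
    stepNet δ M T p x = k := by
  set K := M ^ 2 * T
  have hK : (0 : ℝ) < K := by exact_mod_cast hk.trans_le' (Nat.zero_le k)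
  have hε₁ : K * δ ≤ 1 := by rwa [le_div_iff₀' hK] at hδ₁
  have hy : K * x ∈ Icc (k : ℝ) (k + 1 - if k + 2 ≤ K then K * δ else 0) := by
    have h₁ := mul_le_mul_of_nonneg_left hx.1 hK.le
    have h₂ := mul_le_mul_of_nonneg_left hx.2 hK.le
    rw [mul_div_cancel₀ _ hK.ne'] at h₁
    rw [mul_sub, mul_div_cancel₀ _ hK.ne', mul_ite, mul_zero] at h₂
    exact ⟨h₁, h₂⟩
  exact digitNet_eq (by positivity) hT hTp hk (clamp_mem_Icc hk (by positivity) hε₁ hy)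

variable {W : ℝ}

theorem reLUNetRec_digitLayer (ε : ℝ) (w m : ℕ) {L' : ℕ} {f : ℝ → ℝ → ℝ}
    (hf : ReLUNetRec W L' 2 (fun v => f (v 0) (v 1))) (hW : 2 + 2 * m ≤ W) :
    ReLUNetRec W (L' + 1) 2 (fun v => digitLayer ε w m f (v 0) (v 1)) := by
  -- hidden neurons: `z`, `s`, then `z - t j + ε` and `z - t j` for every threshold `t j`
  let t : Fin m → ℝ := fun j => (j + 1) * w
  let A : Matrix (Fin 2 ⊕ (Fin m ⊕ Fin m)) (Fin 2) ℝ := fromRows 1 (of fun _ => Pi.single 0 1)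
  let b : Fin 2 ⊕ (Fin m ⊕ Fin m) → ℝ := Sum.elim 0 (Sum.elim (fun j => ε - t j) (-t))
  let C : Matrix (Fin 2) (Fin m) ℝ := of fun o _ => ![-(w / ε), w / ε] o
  have hcard : (Fintype.card (Fin 2 ⊕ (Fin m ⊕ Fin m)) : ℝ) ≤ W := by
    simp only [Fintype.card_sum, Fintype.card_fin]; push_cast; linarith
  convert hf.relu_layer hcard A b (fromCols 1 (fromCols C (-C))) 0 using 2 with v
  have hsum : (w : ℝ) * ∑ j, ramp ε (t j) (v 0) =
      ∑ j, w / ε * max (v 0 + (ε - t j)) 0 - ∑ j, w / ε * max (v 0 + -t j) 0 := by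
    rw [Finset.mul_sum, ← Finset.sum_sub_distrib]
    exact Finset.sum_congr rfl fun j _ => by rw [ramp]; ring_nf
  rw [digitLayer, rampCount, ← Fin.sum_univ_eq_sum_range (fun j => ramp ε ((j + 1) * w) (v 0)),
    hsum]
  simp [A, b, C, fromRows_mulVec, fromCols_mulVec, mulVec, dotProduct, Fin.sum_univ_two]
  congr 1; ring

theorem reLUNetRec_binaryDigits (ε : ℝ) (hW : 4 ≤ W) :
    ∀ p, ReLUNetRec W p 2 (fun v => binaryDigits ε p (v 0) (v 1))
  | 0 => ReLUNetRec.coord 1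
  | p + 1 => reLUNetRec_digitLayer ε _ 1 (reLUNetRec_binaryDigits ε hW p) (by norm_num; linarith)

theorem reLUNetRec_digitNet (ε : ℝ) {M T p : ℕ} (hM : 0 < M) (hW : 4 ≤ W) (hWM : 2 * M ≤ W) :
    ReLUNetRec W (p + 2) 2 (fun v => digitNet ε M T p (v 0) (v 1)) := by
  have hWM' : 2 + 2 * ((M - 1 : ℕ) : ℝ) ≤ W := by rw [Nat.cast_sub hM, Nat.cast_one]; linarith
  exact reLUNetRec_digitLayer ε (M * T) (M - 1)
    (reLUNetRec_digitLayer ε T (M - 1) (reLUNetRec_binaryDigits ε hW p) hWM') hWM'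

theorem reLUNetRec_stepNet (δ : ℝ) {M T p : ℕ} (hM : 0 < M) (hW : 4 ≤ W) (hWM : 2 * M ≤ W) :
    ReLUNetRec W (p + 3) 1 (fun x => stepNet δ M T p (x 0)) := by
  let K : ℝ := (M ^ 2 * T : ℕ)
  convert (reLUNetRec_digitNet (K * δ) (T := T) (p := p) hM hW hWM).relu_layer (ι := Fin 1)
    (by simp; linarith) (of fun _ _ => -K) (fun _ => K - 1) (of fun o _ => ![-1, 0] o)
    ![K - 1, 0] using 2 with x
  simp [stepNet, K, mulVec, dotProduct]
  ring_nf

end ReLUStep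

theorem Nat.floor_rpow_two_div_le_two_pow {L d : ℕ} (hL : 0 < L) (hd : 0 < d) :
    ⌊(L : ℝ) ^ ((2 : ℝ) / d)⌋₊ ≤ 2 ^ (2 * L) := by
  have h : (L : ℝ) ^ ((2 : ℝ) / d) ≤ (L ^ 2 : ℕ) := by
    rw [Nat.cast_pow, ← Real.rpow_natCast, Nat.cast_ofNat]
    exact Real.rpow_le_rpow_of_exponent_le (by exact_mod_cast hL)
      (_root_.div_le_self zero_le_two (by exact_mod_cast hd))
  calc ⌊(L : ℝ) ^ ((2 : ℝ) / d)⌋₊ ≤ L ^ 2 := Nat.floor_le_of_le h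
    _ ≤ (2 ^ L) ^ 2 := Nat.pow_le_pow_left Nat.lt_two_pow_self.le 2
    _ = 2 ^ (2 * L) := by rw [← pow_mul, mul_comm]

/-- Proposition 4.3: a ReLU FNN of width `4⌊N^{1/d}⌋+3` and depth `4L+5` exactly
implements a step function with `K = ⌊N^{1/d}⌋²⌊L^{2/d}⌋` steps outside the trifling region. -/
theorem relu_step_function
    (N L d : ℕ) (hN : 0 < N) (hL : 0 < L) (hd : 0 < d)
    (K : ℕ) (hK : K = (Nat.floor ((N : ℝ) ^ ((1 : ℝ) / d))) ^ 2 *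
                      Nat.floor ((L : ℝ) ^ ((2 : ℝ) / d)))
    (δ : ℝ) (hδ0 : 0 < δ) (hδ1 : δ ≤ 1 / (3 * K)) :
    ∃ φ : ℝ → ℝ,
      ImplementedBy1 (4 * (Nat.floor ((N : ℝ) ^ ((1 : ℝ) / d)) : ℝ) + 3) (4 * (L : ℝ) + 5) φ ∧
      ∀ k : ℕ, k < K →
        ∀ x ∈ Set.Icc ((k : ℝ) / K) (((k : ℝ) + 1) / K - if k + 2 ≤ K then δ else 0),
          φ x = k := by
  subst hK
  set M := ⌊(N : ℝ) ^ ((1 : ℝ) / d)⌋₊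
  set T := ⌊(L : ℝ) ^ ((2 : ℝ) / d)⌋₊
  have hM : 0 < M := Nat.floor_pos.mpr (Real.one_le_rpow (by exact_mod_cast hN) (by positivity))
  have hT : 0 < T := Nat.floor_pos.mpr (Real.one_le_rpow (by exact_mod_cast hL) (by positivity))
  have hM' : (1 : ℝ) ≤ M := by exact_mod_cast hM
  have hK : (0 : ℝ) < (M ^ 2 * T : ℕ) := by positivity
  have hδ : δ ≤ 1 / (M ^ 2 * T : ℕ) := hδ1.trans (one_div_le_one_div_of_le hK (by linarith))
  refine ⟨ReLUStep.stepNet δ M T (2 * L), ⟨2 * L + 3, by push_cast; linarith,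
    ReLUStep.reLUNetRec_stepNet δ hM (by linarith) (by linarith)⟩, fun k hk x hx => ?_⟩
  exact ReLUStep.stepNet_eq hδ0 hδ hT (Nat.floor_rpow_two_div_le_two_pow hL hd) hk hx
end
end

section
/- For any N, L ∈ ℕ+, there exists a function φ : ℝ → ℝ implemented by a ReLU FNN with width at most 3N and depth at most L such that |φ(x) − x²| ≤ N^{−L} for every x ∈ [0,1]. -/
open Real

noncomputable section

/-!
Let `saw` be the sawtooth mapping each `[k/N, (k+1)/N]` affinely onto `[0, 1]` and `interp` the
piecewise-linear interpolant of `t (1 - t)` at the nodes `j / N`; both are combinations of the `N`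
ReLUs `max (t - j / N) 0`, and on `[0, 1]`
  `N² (t (1 - t) - interp t) = saw t (1 - saw t)`.
So the map `(t, y) ↦ (saw t, N² (y - interp t))`, one ReLU layer of width `N + 1`, sends
`(t, a + t (1 - t))` to `(saw t, N² a + saw t (1 - saw t))`. Starting from `(x, x² + x (1 - x))`,
`L` steps produce `N^{2L} x² + r (1 - r)` with `r ∈ [0, 1]`; dividing by `N^{2L}` leaves an error
of at most `N^{-2L} ≤ N^{-L}`.
-/

open Finset

theorem sum_mul_max_sub_eq_of_mem_Icc {b : ℕ → ℝ} (hb : Monotone b) (c : ℕ → ℝ) {k n : ℕ}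
    (hk : k < n) {t : ℝ} (ht : t ∈ Set.Icc (b k) (b (k + 1))) :
    ∑ j ∈ range n, c j * max (t - b j) 0 = ∑ j ∈ range (k + 1), c j * (t - b j) := by
  have hzero : ∑ j ∈ Ico (k + 1) n, c j * max (t - b j) 0 = 0 := sum_eq_zero fun j hj => by
    have : b (k + 1) ≤ b j := hb (mem_Ico.mp hj).1
    rw [max_eq_right (by linarith [ht.2]), mul_zero]
  rw [← sum_range_add_sum_Ico _ hk, hzero, add_zero]
  refine sum_congr rfl fun j hj => ?_
  have : b j ≤ b k := hb (Nat.lt_succ_iff.mp (mem_range.mp hj))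
  rw [max_eq_left (by linarith [ht.1])]

theorem exists_lt_mem_Icc_div {N : ℕ} (hN : 0 < N) {t : ℝ} (ht : t ∈ Set.Icc (0 : ℝ) 1) :
    ∃ k < N, t ∈ Set.Icc ((k : ℝ) / N) (((k + 1 : ℕ) : ℝ) / N) := by
  have hN' : (0 : ℝ) < N := by exact_mod_cast hN
  have hNt : 0 ≤ N * t := mul_nonneg hN'.le ht.1
  refine ⟨min ⌊N * t⌋₊ (N - 1), by omega, ?_, ?_⟩
  · rw [div_le_iff₀ hN']
    calc ((min ⌊N * t⌋₊ (N - 1) : ℕ) : ℝ) ≤ ⌊N * t⌋₊ := by exact_mod_cast min_le_left _ _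
      _ ≤ N * t := Nat.floor_le hNt
      _ = t * N := mul_comm _ _
  · rw [le_div_iff₀ hN']
    rcases min_choice ⌊N * t⌋₊ (N - 1) with h | h <;> rw [h]
    · have := Nat.lt_floor_add_one (N * t)
      push_cast
      linarith
    · push_cast [Nat.sub_add_cancel hN]
      nlinarith [ht.2]

theorem monotone_natCast_div (N : ℕ) : Monotone fun j : ℕ => (j : ℝ) / N :=
  fun _ _ h => div_le_div_of_nonneg_right (Nat.cast_le.mpr h) (Nat.cast_nonneg N)

def relu {n : ℕ} (v : Fin n → ℝ) : Fin n → ℝ := fun i => max (v i) 0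

namespace ReLUNetRec

variable {W : ℝ} {d n : ℕ}

theorem mul_apply_of_isAffineMap {A : (Fin d → ℝ) → Fin n → ℝ} (hA : IsAffineMap d n A)
    (c : ℝ) (i : Fin n) : ReLUNetRec W 0 d fun x => c * A x i := by
  obtain ⟨M, b, hMb⟩ := hA
  refine ⟨fun x _ => c * A x i, ⟨Matrix.of fun _ j => c * M i j, fun _ => c * b i, fun x => ?_⟩,
    fun _ => rfl⟩
  ext
  simp [hMb, Matrix.mulVec, dotProduct, mul_sum, mul_add, mul_assoc]

theorem comp_relu_comp (hn : 0 < n) (hW : (n : ℝ) ≤ W) {A : (Fin d → ℝ) → Fin n → ℝ}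
    (hA : IsAffineMap d n A) {k : ℕ} {ψ : (Fin n → ℝ) → ℝ} (hψ : ReLUNetRec W k n ψ) :
    ReLUNetRec W (k + 1) d (ψ ∘ relu ∘ A) :=
  ⟨n, hn, hW, A, hA, ψ, hψ, fun _ => rfl⟩

theorem comp_iterate (hn : 0 < n) (hW : (n : ℝ) ≤ W) {A : (Fin n → ℝ) → Fin n → ℝ}
    (hA : IsAffineMap n n A) {k : ℕ} {ψ : (Fin n → ℝ) → ℝ} (hψ : ReLUNetRec W k n ψ) (m : ℕ) :
    ReLUNetRec W (k + m) n (ψ ∘ (relu ∘ A)^[m]) := by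
  induction m with
  | zero => exact hψ
  | succ m ih =>
    rw [Function.iterate_succ, ← Function.comp_assoc]
    exact comp_relu_comp hn hW hA ih

theorem implementedBy1 (hn : 0 < n) (hW : (n : ℝ) ≤ W) {A : ℝ → Fin n → ℝ}
    (hA : IsAffineMap 1 n fun x => A (x 0)) {k : ℕ} {ψ : (Fin n → ℝ) → ℝ}
    (hψ : ReLUNetRec W k n ψ) : ImplementedBy1 W ((k + 1 : ℕ) : ℝ) fun t => ψ (relu (A t)) :=
  ⟨k + 1, le_rfl, comp_relu_comp hn hW hA hψ⟩

end ReLUNetRec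

namespace ReLUSquare

variable {N : ℕ} {t : ℝ}

variable (N)

def sawCoeff : ℕ → ℝ
  | 0 => N
  | j + 1 => 2 * N * (-1) ^ (j + 1)

def interpCoeff : ℕ → ℝ
  | 0 => 1 - 1 / N
  | _ + 1 => -2 / N

def saw (t : ℝ) : ℝ := ∑ j ∈ range N, sawCoeff N j * max (t - j / N) 0

def interp (t : ℝ) : ℝ := ∑ j ∈ range N, interpCoeff N j * max (t - j / N) 0

variable {N}

theorem sum_sawCoeff_mul (hN : (N : ℝ) ≠ 0) (k : ℕ) :
    ∑ j ∈ range (k + 1), sawCoeff N j * (t - j / N)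
      = 1 / 2 + (-1) ^ k * (N * t - k - 1 / 2) := by
  induction k with
  | zero => simp [sawCoeff]
  | succ k ih =>
    rw [sum_range_succ, ih, sawCoeff]
    field_simp
    push_cast
    ring

theorem sum_interpCoeff_mul (hN : (N : ℝ) ≠ 0) (k : ℕ) :
    ∑ j ∈ range (k + 1), interpCoeff N j * (t - j / N)
      = t * (N - 1 - 2 * k) / N + k * (k + 1) / N ^ 2 := by
  induction k with
  | zero =>
    rw [zero_add, sum_range_one, interpCoeff]
    field_simp
    push_cast
    ring
  | succ k ih =>
    rw [sum_range_succ, ih, interpCoeff]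
    field_simp
    push_cast
    ring

theorem saw_eq_of_mem_Icc {k : ℕ} (hk : k < N)
    (ht : t ∈ Set.Icc ((k : ℝ) / N) (((k + 1 : ℕ) : ℝ) / N)) :
    saw N t = 1 / 2 + (-1) ^ k * (N * t - k - 1 / 2) := by
  rw [saw, sum_mul_max_sub_eq_of_mem_Icc (monotone_natCast_div N) _ hk ht,
    sum_sawCoeff_mul (Nat.cast_ne_zero.mpr (by omega))]

theorem interp_eq_of_mem_Icc {k : ℕ} (hk : k < N)
    (ht : t ∈ Set.Icc ((k : ℝ) / N) (((k + 1 : ℕ) : ℝ) / N)) :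
    interp N t = t * (N - 1 - 2 * k) / N + k * (k + 1) / N ^ 2 := by
  rw [interp, sum_mul_max_sub_eq_of_mem_Icc (monotone_natCast_div N) _ hk ht,
    sum_interpCoeff_mul (Nat.cast_ne_zero.mpr (by omega))]

theorem saw_mem_Icc (hN : 0 < N) (ht : t ∈ Set.Icc (0 : ℝ) 1) : saw N t ∈ Set.Icc (0 : ℝ) 1 := by
  obtain ⟨k, hk, htk⟩ := exists_lt_mem_Icc_div hN ht
  have hN' : (0 : ℝ) < N := by exact_mod_cast hN
  have hlo : (k : ℝ) ≤ N * t := by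
    have := htk.1; rw [div_le_iff₀ hN'] at this; linarith
  have hhi : N * t ≤ k + 1 := by
    have := htk.2; rw [le_div_iff₀ hN'] at this; push_cast at this; linarith
  have hdev : |(-1) ^ k * (N * t - k - 1 / 2)| ≤ 1 / 2 := by
    rw [abs_mul, abs_pow, abs_neg, abs_one, one_pow, one_mul, abs_le]
    constructor <;> linarith
  rw [saw_eq_of_mem_Icc hk htk]
  constructor <;> linarith [abs_le.mp hdev]

theorem sq_mul_sub_interp (hN : 0 < N) (ht : t ∈ Set.Icc (0 : ℝ) 1) :
    N ^ 2 * (t * (1 - t) - interp N t) = saw N t * (1 - saw N t) := by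
  obtain ⟨k, hk, htk⟩ := exists_lt_mem_Icc_div hN ht
  have hN' : (N : ℝ) ≠ 0 := by positivity
  have hsign : ((-1 : ℝ) ^ k) ^ 2 = 1 := by rw [← pow_mul, mul_comm, pow_mul, neg_one_sq, one_pow]
  calc N ^ 2 * (t * (1 - t) - interp N t) = 1 / 4 - (N * t - k - 1 / 2) ^ 2 := by
        rw [interp_eq_of_mem_Icc hk htk]
        field_simp
        ring
    _ = saw N t * (1 - saw N t) := by
        rw [saw_eq_of_mem_Icc hk htk]
        linear_combination (N * t - k - 1 / 2) ^ 2 * hsign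

variable (N)

def state (t y : ℝ) : Fin (N + 1) → ℝ := Fin.cons y fun j : Fin N => max (t - j / N) 0

def inputLayer (t : ℝ) : Fin (N + 1) → ℝ := Fin.cons t fun j : Fin N => t - j / N

def hiddenLayer (v : Fin (N + 1) → ℝ) : Fin (N + 1) → ℝ :=
  Fin.cons (N ^ 2 * (v 0 - ∑ j : Fin N, interpCoeff N j * v j.succ))
    fun i : Fin N => ∑ j : Fin N, sawCoeff N j * v j.succ - i / N

variable {N}

theorem isAffineMap_inputLayer : IsAffineMap 1 (N + 1) fun x => inputLayer N (x 0) := by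
  refine ⟨Matrix.of fun _ _ => 1, Fin.cons 0 fun i : Fin N => -(i / N : ℝ), fun x => ?_⟩
  ext i
  refine Fin.cases ?_ (fun i => ?_) i <;>
    simp [inputLayer, Matrix.mulVec, dotProduct, sub_eq_add_neg]

theorem isAffineMap_hiddenLayer : IsAffineMap (N + 1) (N + 1) (hiddenLayer N) := by
  refine ⟨Matrix.of (Fin.cons (Fin.cons (N ^ 2) fun j => -(N ^ 2 * interpCoeff N j))
      fun _ => Fin.cons 0 fun j => sawCoeff N j), Fin.cons 0 fun i : Fin N => -(i / N : ℝ),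
      fun v => ?_⟩
  ext i
  refine Fin.cases ?_ (fun i => ?_) i <;>
    simp [hiddenLayer, Matrix.mulVec, dotProduct, Fin.sum_univ_succ, mul_sum, sub_eq_add_neg,
      mul_add, mul_assoc]

theorem relu_inputLayer (ht : 0 ≤ t) : relu (inputLayer N t) = state N t t := by
  ext i
  refine Fin.cases ?_ (fun i => ?_) i <;> simp [relu, inputLayer, state, ht]

theorem hiddenLayer_state (y : ℝ) : hiddenLayer N (state N t y)
    = Fin.cons (N ^ 2 * (y - interp N t)) fun i : Fin N => saw N t - i / N := by
  rw [saw, interp, ← Fin.sum_univ_eq_sum_range, ← Fin.sum_univ_eq_sum_range]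
  simp only [hiddenLayer, state, Fin.cons_zero, Fin.cons_succ]

theorem relu_hiddenLayer_state {y : ℝ} (hy : 0 ≤ N ^ 2 * (y - interp N t)) :
    relu (hiddenLayer N (state N t y)) = state N (saw N t) (N ^ 2 * (y - interp N t)) := by
  rw [hiddenLayer_state]
  ext i
  refine Fin.cases ?_ (fun i => ?_) i <;> simp [relu, state, hy]

theorem iterate_relu_hiddenLayer_state (hN : 0 < N) (m : ℕ) {a : ℝ}
    (ht : t ∈ Set.Icc (0 : ℝ) 1) (ha : 0 ≤ a) :
    ∃ r ∈ Set.Icc (0 : ℝ) 1, (relu ∘ hiddenLayer N)^[m] (state N t (a + t * (1 - t)))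
      = state N r (N ^ (2 * m) * a + r * (1 - r)) := by
  induction m generalizing t a with
  | zero => exact ⟨t, ht, by simp⟩
  | succ m ih =>
    have hstep :
        N ^ 2 * (a + t * (1 - t) - interp N t) = N ^ 2 * a + saw N t * (1 - saw N t) := by
      linear_combination sq_mul_sub_interp hN ht
    have hs := saw_mem_Icc hN ht
    have hnonneg : 0 ≤ N ^ 2 * (a + t * (1 - t) - interp N t) := by
      rw [hstep]; have := mul_nonneg hs.1 (sub_nonneg.mpr hs.2); positivity
    obtain ⟨r, hr, heq⟩ := ih hs (by positivity : 0 ≤ (N : ℝ) ^ 2 * a)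
    refine ⟨r, hr, ?_⟩
    rw [Function.iterate_succ_apply, Function.comp_apply, relu_hiddenLayer_state hnonneg, hstep,
      heq]
    ring_nf

variable (N) in
def sqApprox (m : ℕ) (t : ℝ) : ℝ :=
  ((N : ℝ) ^ (2 * (m + 1)))⁻¹ *
    hiddenLayer N ((relu ∘ hiddenLayer N)^[m] (relu (inputLayer N t))) 0

theorem implementedBy1_sqApprox (hN : 0 < N) (m : ℕ) :
    ImplementedBy1 (3 * N) ((m + 1 : ℕ) : ℝ) (sqApprox N m) := by
  have hW : ((N + 1 : ℕ) : ℝ) ≤ 3 * N := by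
    have : (1 : ℝ) ≤ N := by exact_mod_cast hN
    push_cast
    linarith
  have hψ := ReLUNetRec.comp_iterate N.succ_pos hW isAffineMap_hiddenLayer
    (ReLUNetRec.mul_apply_of_isAffineMap isAffineMap_hiddenLayer ((N : ℝ) ^ (2 * (m + 1)))⁻¹ 0) m
  rw [zero_add] at hψ
  exact ReLUNetRec.implementedBy1 N.succ_pos hW isAffineMap_inputLayer hψ

theorem sqApprox_sub_sq (hN : 0 < N) (m : ℕ) (ht : t ∈ Set.Icc (0 : ℝ) 1) :
    ∃ r ∈ Set.Icc (0 : ℝ) 1, sqApprox N m t - t ^ 2 = r * (1 - r) / N ^ (2 * (m + 1)) := by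
  have hstart : state N t t = state N t (t ^ 2 + t * (1 - t)) := by ring_nf
  obtain ⟨r, hr, hiter⟩ := iterate_relu_hiddenLayer_state hN m ht (sq_nonneg t)
  refine ⟨saw N r, saw_mem_Icc hN hr, ?_⟩
  have hlast : (N : ℝ) ^ 2 * (N ^ (2 * m) * t ^ 2 + r * (1 - r) - interp N r)
      = N ^ (2 * (m + 1)) * t ^ 2 + saw N r * (1 - saw N r) := by
    linear_combination sq_mul_sub_interp hN hr
  rw [sqApprox, relu_inputLayer ht.1, hstart, hiter, hiddenLayer_state, Fin.cons_zero, hlast]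
  field_simp
  ring

theorem abs_sqApprox_sub_sq_le (hN : 0 < N) (m : ℕ) (ht : t ∈ Set.Icc (0 : ℝ) 1) :
    |sqApprox N m t - t ^ 2| ≤ ((N : ℝ) ^ (m + 1))⁻¹ := by
  obtain ⟨r, ⟨hr0, hr1⟩, herr⟩ := sqApprox_sub_sq hN m ht
  have hN1 : (1 : ℝ) ≤ N := by exact_mod_cast hN
  have hq : r * (1 - r) ∈ Set.Icc (0 : ℝ) 1 := ⟨by nlinarith, by nlinarith⟩
  rw [herr, abs_of_nonneg (div_nonneg hq.1 (by positivity)), ← one_div]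
  calc r * (1 - r) / N ^ (2 * (m + 1)) ≤ 1 / N ^ (2 * (m + 1)) := by gcongr; exact hq.2
    _ ≤ 1 / N ^ (m + 1) := by gcongr; omega

end ReLUSquare

/-- Lemma 5.1: ReLU FNNs of width `3N` and depth `L` approximate `x²` on `[0,1]`
within `N^{-L}`. -/
theorem relu_approx_square
    (N L : ℕ) (hN : 0 < N) (hL : 0 < L) :
    ∃ φ : ℝ → ℝ,
      ImplementedBy1 (3 * (N : ℝ)) (L : ℝ) φ ∧
      ∀ x ∈ Set.Icc (0 : ℝ) 1, |φ x - x ^ 2| ≤ (N : ℝ) ^ (-(L : ℝ)) := by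
  obtain ⟨m, rfl⟩ : ∃ m, L = m + 1 := ⟨L - 1, by omega⟩
  refine ⟨ReLUSquare.sqApprox N m, ReLUSquare.implementedBy1_sqApprox hN m, fun x hx => ?_⟩
  rw [Real.rpow_neg (Nat.cast_nonneg N), Real.rpow_natCast]
  exact ReLUSquare.abs_sqApprox_sub_sq_le hN m hx
end
end

section
/- For any N, L ∈ ℕ+, there exists a function φ : ℝ² → ℝ implemented by a ReLU FNN with width at most 9N and depth at most L such that |φ(x,y) − xy| ≤ 6·N^{−L} for all x, y ∈ [0,1]. -/
open Real

noncomputable section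

section Aux
open Finset

/-- scalar affine function -/
def SAff (m : ℕ) (f : (Fin m → ℝ) → ℝ) : Prop :=
  ∃ (c : Fin m → ℝ) (b : ℝ), ∀ u, f u = ∑ j, c j * u j + b

lemma SAff.const (m : ℕ) (r : ℝ) : SAff m (fun _ => r) :=
  ⟨0, r, fun u => by simp⟩

lemma SAff.coord (m : ℕ) (j0 : Fin m) : SAff m (fun u => u j0) :=
  ⟨fun j => if j = j0 then 1 else 0, 0, fun u => by
    simp [ite_mul, Finset.sum_ite_eq']⟩

lemma SAff.add {m f g} (hf : SAff m f) (hg : SAff m g) : SAff m (fun u => f u + g u) := by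
  obtain ⟨c1, b1, h1⟩ := hf; obtain ⟨c2, b2, h2⟩ := hg
  exact ⟨c1 + c2, b1 + b2, fun u => by simp [h1, h2, add_mul, Finset.sum_add_distrib]; ring⟩

lemma SAff.smul {m f} (r : ℝ) (hf : SAff m f) : SAff m (fun u => r * f u) := by
  obtain ⟨c, b, h⟩ := hf
  exact ⟨fun j => r * c j, r * b, fun u => by simp [h, Finset.mul_sum, mul_add, mul_assoc]⟩

lemma SAff.sub {m f g} (hf : SAff m f) (hg : SAff m g) : SAff m (fun u => f u - g u) := by
  have := hf.add (hg.smul (-1))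
  simpa [sub_eq_add_neg] using this

lemma SAff.sum {m : ℕ} {ι : Type*} (s : Finset ι) (f : ι → (Fin m → ℝ) → ℝ)
    (h : ∀ k ∈ s, SAff m (f k)) : SAff m (fun u => ∑ k ∈ s, f k u) := by
  classical
  induction s using Finset.induction_on with
  | empty => simpa using SAff.const m 0
  | @insert a s' hx ih =>
    have := (h a (Finset.mem_insert_self a s')).add
      (ih fun k hk => h k (Finset.mem_insert_of_mem hk))
    simpa [Finset.sum_insert hx] using this

lemma isAffine_of_coords {m n : ℕ} (A : (Fin m → ℝ) → (Fin n → ℝ))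
    (h : ∀ i, SAff m (fun u => A u i)) : IsAffineMap m n A := by
  choose c b hcb using h
  refine ⟨Matrix.of c, b, fun x => funext fun i => ?_⟩
  simpa [Matrix.mulVec, dotProduct] using hcb i x

lemma isAffineMap_comp {m n p : ℕ} {A : (Fin n → ℝ) → (Fin p → ℝ)}
    {E : (Fin m → ℝ) → (Fin n → ℝ)} (hA : IsAffineMap n p A) (hE : IsAffineMap m n E) :
    IsAffineMap m p (fun x => A (E x)) := by
  obtain ⟨M1, b1, h1⟩ := hA; obtain ⟨M2, b2, h2⟩ := hE
  refine ⟨M1 * M2, M1.mulVec b2 + b1, fun x => ?_⟩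
  simp [h1, h2, Matrix.mulVec_add, Matrix.mulVec_mulVec]
  abel

lemma ReLUNetRec.mono {W W' : ℝ} (hW : W ≤ W') :
    ∀ {s d φ}, ReLUNetRec W s d φ → ReLUNetRec W' s d φ := by
  intro s
  induction s with
  | zero => intro d φ h; exact h
  | succ s ih =>
    rintro d φ ⟨n, hn, hnW, A, hA, ψ, hψ, hval⟩
    exact ⟨n, hn, hnW.trans hW, A, hA, ψ, ih hψ, hval⟩

lemma ReLUNetRec.pre {W : ℝ} {s d1 d2 : ℕ} {φ : (Fin d2 → ℝ) → ℝ}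
    {E : (Fin d1 → ℝ) → (Fin d2 → ℝ)} (hφ : ReLUNetRec W s d2 φ) (hE : IsAffineMap d1 d2 E) :
    ReLUNetRec W s d1 (fun x => φ (E x)) := by
  induction s generalizing d2 φ with
  | zero =>
    obtain ⟨A, hA, hval⟩ := hφ
    exact ⟨fun x => A (E x), isAffineMap_comp hA hE, fun x => by simp [hval]⟩
  | succ s ih =>
    obtain ⟨n, hn, hnW, A, hA, ψ, hψ, hval⟩ := hφ
    exact ⟨n, hn, hnW, fun x => A (E x), isAffineMap_comp hA hE, ψ, hψ, fun x => by simp [hval]⟩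

lemma ReLUNetRec.smul {W : ℝ} {s d : ℕ} {φ : (Fin d → ℝ) → ℝ} (r : ℝ)
    (hφ : ReLUNetRec W s d φ) : ReLUNetRec W s d (fun x => r * φ x) := by
  induction s generalizing d φ with
  | zero =>
    obtain ⟨A, hA, hval⟩ := hφ
    obtain ⟨M, b, hM⟩ := hA
    refine ⟨fun x i => r * A x i, ⟨r • M, r • b, fun x => ?_⟩, fun x => by simp [hval]⟩
    funext i
    simp [hM, Matrix.smul_mulVec, mul_add]
  | succ s ih =>
    obtain ⟨n, hn, hnW, A, hA, ψ, hψ, hval⟩ := hφ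
    exact ⟨n, hn, hnW, A, hA, fun u => r * ψ u, ih hψ, fun x => by simp [hval]⟩

lemma ReLUNetRec.add {W1 W2 : ℝ} {s : ℕ} : ∀ {d : ℕ} {φ1 φ2 : (Fin d → ℝ) → ℝ},
    ReLUNetRec W1 s d φ1 → ReLUNetRec W2 s d φ2 →
    ReLUNetRec (W1 + W2) s d (fun x => φ1 x + φ2 x) := by
  induction s with
  | zero =>
    rintro d φ1 φ2 ⟨A1, hA1, h1⟩ ⟨A2, hA2, h2⟩
    obtain ⟨M1, b1, hM1⟩ := hA1; obtain ⟨M2, b2, hM2⟩ := hA2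
    refine ⟨fun x i => A1 x i + A2 x i, ⟨M1 + M2, b1 + b2, fun x => ?_⟩,
      fun x => by simp [h1, h2]⟩
    funext i
    simp [hM1, hM2, Matrix.add_mulVec]
    ring
  | succ s ih =>
    rintro d φ1 φ2 ⟨n1, hn1, hnW1, A1, hA1, ψ1, hψ1, h1⟩ ⟨n2, hn2, hnW2, A2, hA2, ψ2, hψ2, h2⟩
    refine ⟨n1 + n2, by omega, by push_cast; linarith,
      fun x => Fin.addCases (A1 x) (A2 x), ?_, ?_⟩
    · obtain ⟨M1, b1, hM1⟩ := hA1; obtain ⟨M2, b2, hM2⟩ := hA2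
      refine ⟨Matrix.of (fun i j => Fin.addCases (fun i1 => M1 i1 j) (fun i2 => M2 i2 j) i),
        Fin.addCases b1 b2, fun x => funext fun i => ?_⟩
      induction i using Fin.addCases with
      | left i1 => simp [hM1, Matrix.mulVec, dotProduct]
      | right i2 => simp [hM2, Matrix.mulVec, dotProduct]
    · refine ⟨fun u => ψ1 (fun i1 => u (Fin.castAdd n2 i1)) + ψ2 (fun i2 => u (Fin.natAdd n1 i2)),
        ih (hψ1.pre (isAffine_of_coords _ fun i1 => SAff.coord _ _))
           (hψ2.pre (isAffine_of_coords _ fun i2 => SAff.coord _ _)), fun x => ?_⟩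
      simp [h1, h2]

def ga (N k : ℕ) : ℝ := if k = 0 then (N : ℝ) else (-1 : ℝ) ^ k * (2 * N)
def Bb (N k : ℕ) : ℝ := if k = 0 then 1 - 1 / (N : ℝ) else -2 / (N : ℝ)
def gN (N : ℕ) (t : ℝ) : ℝ := ∑ k ∈ range N, ga N k * max (t - k / N) 0
def BN (N : ℕ) (t : ℝ) : ℝ := ∑ k ∈ range N, Bb N k * max (t - k / N) 0
def FN (N : ℕ) : ℕ → ℝ → ℝ
  | 0 => fun t => t
  | s + 1 => fun t => t - BN N t - gN N t / (N : ℝ) ^ 2 + FN N s (gN N t) / (N : ℝ) ^ 2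

lemma sumA (N : ℕ) (hN : 0 < N) (t : ℝ) : ∀ j : ℕ,
    ∑ k ∈ range (j + 1), ga N k * (t - k / N) =
      if Even j then (N : ℝ) * t - j else ((j : ℝ) + 1) - N * t := by
  have hN0 : (N : ℝ) ≠ 0 := Nat.cast_ne_zero.2 hN.ne'
  intro j
  induction j with
  | zero => simp [ga]
  | succ j ih =>
    rw [Finset.sum_range_succ, ih]
    rcases Nat.even_or_odd j with hj | hj
    · rw [if_pos hj, if_neg (by simp [Nat.even_add_one, hj])]
      have h2 : (-1 : ℝ) ^ (j + 1) = -1 := by rw [pow_succ, hj.neg_one_pow]; ring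
      rw [ga, if_neg (Nat.succ_ne_zero j), h2]
      push_cast
      field_simp
      ring
    · rw [if_neg (Nat.not_even_iff_odd.2 hj), if_pos hj.add_one]
      have h2 : (-1 : ℝ) ^ (j + 1) = 1 := hj.add_one.neg_one_pow
      rw [ga, if_neg (Nat.succ_ne_zero j), h2]
      push_cast
      field_simp
      ring

lemma sumB (N : ℕ) (hN : 0 < N) (t : ℝ) : ∀ j : ℕ,
    ∑ k ∈ range (j + 1), Bb N k * (t - k / N) =
      (1 - (2 * j + 1) / N) * t + j * (j + 1) / (N : ℝ) ^ 2 := by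
  have hN0 : (N : ℝ) ≠ 0 := Nat.cast_ne_zero.2 hN.ne'
  intro j
  induction j with
  | zero => simp [Bb]
  | succ j ih =>
    rw [Finset.sum_range_succ, ih, Bb, if_neg (Nat.succ_ne_zero j)]
    push_cast
    field_simp
    ring

lemma piece (N j : ℕ) (hN : 0 < N) (hj : j < N) {t : ℝ}
    (h1 : (j : ℝ) / N ≤ t) (h2 : t ≤ ((j : ℝ) + 1) / N) :
    gN N t = (if Even j then (N : ℝ) * t - j else ((j : ℝ) + 1) - N * t) ∧
    BN N t = (1 - (2 * j + 1) / N) * t + j * (j + 1) / (N : ℝ) ^ 2 := by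
  have hN0 : (0 : ℝ) < N := Nat.cast_pos.2 hN
  have key : ∀ c : ℕ → ℝ, ∑ k ∈ range N, c k * max (t - k / N) 0
      = ∑ k ∈ range (j + 1), c k * (t - k / N) := by
    intro c
    rw [← Finset.sum_subset (Finset.range_subset_range.2 (by omega : j + 1 ≤ N))]
    · refine Finset.sum_congr rfl fun k hk => ?_
      have hk' : (k : ℝ) ≤ j := by
        exact_mod_cast Nat.lt_succ_iff.1 (Finset.mem_range.1 hk)
      have hkt : (k : ℝ) / N ≤ t := le_trans (by gcongr) h1
      rw [max_eq_left (by linarith)]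
    · intro k _ hk
      have hk' : (j : ℝ) + 1 ≤ k := by
        have : j + 1 ≤ k := by
          rcases Nat.lt_or_ge k (j+1) with h | h
          · exact absurd (Finset.mem_range.2 h) hk
          · exact h
        exact_mod_cast this
      have : t ≤ (k : ℝ) / N := le_trans h2 (by gcongr)
      rw [max_eq_right (by linarith), mul_zero]
  constructor
  · rw [gN, key, sumA N hN t j]
  · rw [BN, key, sumB N hN t j]

lemma exists_interval (N : ℕ) (hN : 0 < N) {t : ℝ} (ht : t ∈ Set.Icc (0:ℝ) 1) :
    ∃ j : ℕ, j < N ∧ (j : ℝ) / N ≤ t ∧ t ≤ ((j : ℝ) + 1) / N := by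
  have hN0 : (0 : ℝ) < N := Nat.cast_pos.2 hN
  obtain ⟨ht0, ht1⟩ := ht
  have hfl : (0:ℤ) ≤ ⌊(N : ℝ) * t⌋ := Int.floor_nonneg.2 (by positivity)
  have htn : ((⌊(N : ℝ) * t⌋).toNat : ℝ) = ((⌊(N : ℝ) * t⌋ : ℤ) : ℝ) := by
    exact_mod_cast Int.toNat_of_nonneg hfl
  by_cases hc : (⌊(N : ℝ) * t⌋).toNat < N
  · refine ⟨(⌊(N : ℝ) * t⌋).toNat, hc, ?_, ?_⟩
    · rw [div_le_iff₀ hN0, htn, mul_comm]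
      exact Int.floor_le _
    · rw [le_div_iff₀ hN0, mul_comm t, htn]
      exact le_of_lt (Int.lt_floor_add_one _)
  · have h1 : (N : ℝ) ≤ (N : ℝ) * t := by
      have hle : (N : ℝ) ≤ ((⌊(N : ℝ) * t⌋).toNat : ℝ) := by
        exact_mod_cast le_of_not_gt hc
      rw [htn] at hle
      exact hle.trans (Int.floor_le _)
    have ht1' : 1 ≤ t := by nlinarith
    have hcast : ((N - 1 : ℕ) : ℝ) = (N : ℝ) - 1 := by
      rw [Nat.cast_sub hN, Nat.cast_one]
    refine ⟨N - 1, by omega, ?_, ?_⟩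
    · rw [hcast]
      calc ((N:ℝ) - 1) / N ≤ 1 := by rw [div_le_one hN0]; linarith
        _ ≤ t := ht1'
    · rw [hcast, le_div_iff₀ hN0]
      nlinarith

lemma gB_props (N : ℕ) (hN : 0 < N) {t : ℝ} (ht : t ∈ Set.Icc (0:ℝ) 1) :
    gN N t ∈ Set.Icc (0:ℝ) 1 ∧ gN N t ≤ (N : ℝ) * t ∧
      BN N t = t - t ^ 2 - (gN N t - (gN N t) ^ 2) / (N : ℝ) ^ 2 := by
  have hN0 : (0 : ℝ) < N := Nat.cast_pos.2 hN
  obtain ⟨j, hj, h1, h2⟩ := exists_interval N hN ht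
  obtain ⟨hg, hB⟩ := piece N j hN hj h1 h2
  have hθ0 : (j : ℝ) ≤ (N : ℝ) * t := by rwa [div_le_iff₀ hN0, mul_comm] at h1
  have hθ1 : (N : ℝ) * t ≤ (j : ℝ) + 1 := by rwa [le_div_iff₀ hN0, mul_comm t] at h2
  have hj0 : (0 : ℝ) ≤ (j : ℝ) := Nat.cast_nonneg j
  rcases Nat.even_or_odd j with hpar | hpar
  · rw [if_pos hpar] at hg
    rw [hg, hB]
    refine ⟨⟨by linarith, by linarith⟩, by linarith, ?_⟩
    field_simp
    ring
  · have hj1 : (1 : ℝ) ≤ (j : ℝ) := by exact_mod_cast hpar.pos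
    rw [if_neg (Nat.not_even_iff_odd.2 hpar)] at hg
    rw [hg, hB]
    refine ⟨⟨by linarith, by linarith⟩, by linarith, ?_⟩
    field_simp
    ring

-- new material starts here

lemma Fbound (N : ℕ) (hN : 0 < N) : ∀ s : ℕ, ∀ t ∈ Set.Icc (0:ℝ) 1,
    0 ≤ FN N s t - t ^ 2 ∧ FN N s t - t ^ 2 ≤ 1 / (4 * (N : ℝ) ^ (2 * s)) := by
  have hN0 : (0 : ℝ) < N := Nat.cast_pos.2 hN
  intro s
  induction s with
  | zero =>
    intro t ⟨ht0, ht1⟩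
    constructor
    · show (0:ℝ) ≤ FN N 0 t - t ^ 2
      simp only [FN]
      nlinarith
    · show FN N 0 t - t ^ 2 ≤ _
      simp only [FN, Nat.mul_zero, pow_zero]
      nlinarith [sq_nonneg (t - 1/2)]
  | succ s ih =>
    intro t ht
    obtain ⟨hg01, hgle, hstar⟩ := gB_props N hN ht
    obtain ⟨ih1, ih2⟩ := ih (gN N t) hg01
    have key : FN N (s+1) t - t ^ 2 = (FN N s (gN N t) - (gN N t) ^ 2) / (N : ℝ) ^ 2 := by
      simp only [FN]
      rw [hstar]
      field_simp
      ring
    rw [key]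
    constructor
    · positivity
    · calc (FN N s (gN N t) - (gN N t) ^ 2) / (N : ℝ) ^ 2
          ≤ (1 / (4 * (N : ℝ) ^ (2 * s))) / (N : ℝ) ^ 2 := by gcongr
        _ = 1 / (4 * (N : ℝ) ^ (2 * (s+1))) := by
            rw [show 2 * (s+1) = 2 * s + 2 by ring, pow_add]
            field_simp

def layerA (N : ℕ) (x : Fin 2 → ℝ) (i : Fin (N+1)) : ℝ :=
  if (i : ℕ) < N then x 0 - (i : ℕ) / (N : ℝ) else x 1
def gamE (N : ℕ) (u : Fin (N+1) → ℝ) : ℝ := ∑ k : Fin N, ga N k * u (Fin.castSucc k)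
def betE (N : ℕ) (u : Fin (N+1) → ℝ) : ℝ := ∑ k : Fin N, Bb N k * u (Fin.castSucc k)
def EE (N : ℕ) (u : Fin (N+1) → ℝ) : Fin 2 → ℝ :=
  ![gamE N u, (N : ℝ) ^ 2 * (u (Fin.last N) + u 0 - betE N u) - gamE N u]

lemma relu_layer (N : ℕ) (hN : 0 < N) {t P : ℝ} (ht0 : 0 ≤ t) (hP : 0 ≤ P) :
    EE N (fun i => max (layerA N ![t, P] i) 0) =
      ![gN N t, (N : ℝ) ^ 2 * (P + t - BN N t) - gN N t] := by
  have hu0 : max (layerA N ![t, P] (0 : Fin (N+1))) 0 = t := by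
    simp [layerA, hN, ht0]
  have hul : max (layerA N ![t, P] (Fin.last N)) 0 = P := by
    simp [layerA, hP]
  have hcs : ∀ k : Fin N, max (layerA N ![t, P] (Fin.castSucc k)) 0 = max (t - (k : ℕ) / N) 0 := by
    intro k
    simp [layerA, k.isLt]
  have hγ : gamE N (fun i => max (layerA N ![t, P] i) 0) = gN N t := by
    rw [gamE, gN]
    rw [Finset.sum_congr rfl fun k _ => by rw [hcs k]]
    exact Fin.sum_univ_eq_sum_range (fun k => ga N k * max (t - (k : ℕ) / N) 0) N
  have hβ : betE N (fun i => max (layerA N ![t, P] i) 0) = BN N t := by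
    rw [betE, BN]
    rw [Finset.sum_congr rfl fun k _ => by rw [hcs k]]
    exact Fin.sum_univ_eq_sum_range (fun k => Bb N k * max (t - (k : ℕ) / N) 0) N
  rw [EE, hγ, hβ, hu0, hul]

lemma sc2 (N : ℕ) (hN : 0 < N) : ∀ s : ℕ, ∃ φ : (Fin 2 → ℝ) → ℝ,
    ReLUNetRec ((N : ℝ) + 1) s 2 φ ∧ ∀ t ∈ Set.Icc (0:ℝ) 1, ∀ P, 0 ≤ P →
      φ ![t, P] = (N : ℝ) ^ (2 * s) * (P + FN N s t) := by
  have hN0 : (0 : ℝ) < N := Nat.cast_pos.2 hN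
  intro s
  induction s with
  | zero =>
    refine ⟨fun x => x 1 + x 0, ⟨fun x => ![x 1 + x 0],
      isAffine_of_coords _ fun i => by simpa using (SAff.coord 2 1).add (SAff.coord 2 0),
      fun x => by simp⟩, fun t ht P hP => ?_⟩
    simp [FN]
  | succ s ih =>
    obtain ⟨ψ, hψnet, hψ⟩ := ih
    have hAaff : IsAffineMap 2 (N+1) (layerA N) := by
      refine isAffine_of_coords _ fun i => ?_
      by_cases h : (i : ℕ) < N
      · simp only [layerA, h, if_true]
        exact (SAff.coord 2 0).sub (SAff.const 2 _)
      · simp only [layerA, h, if_false]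
        exact SAff.coord 2 1
    have hgam : SAff (N+1) (gamE N) :=
      SAff.sum Finset.univ (fun (k : Fin N) u => ga N (k : ℕ) * u (Fin.castSucc k))
        (fun k _ => SAff.smul (ga N k) (SAff.coord (N+1) (Fin.castSucc k)))
    have hbet : SAff (N+1) (betE N) :=
      SAff.sum Finset.univ (fun (k : Fin N) u => Bb N (k : ℕ) * u (Fin.castSucc k))
        (fun k _ => SAff.smul (Bb N k) (SAff.coord (N+1) (Fin.castSucc k)))
    have hEaff : IsAffineMap (N+1) 2 (EE N) := by
      refine isAffine_of_coords _ fun i => ?_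
      fin_cases i
      · simpa [EE] using hgam
      · simpa [EE] using (SAff.smul ((N:ℝ)^2)
          (((SAff.coord (N+1) (Fin.last N)).add (SAff.coord (N+1) 0)).sub hbet)).sub hgam
    refine ⟨fun x => ψ (EE N (fun i => max (layerA N x i) 0)),
      ⟨N + 1, by omega, by push_cast; linarith, layerA N, hAaff,
        fun u => ψ (EE N u), hψnet.pre hEaff, fun x => rfl⟩, fun t ht P hP => ?_⟩
    show ψ (EE N (fun i => max (layerA N ![t, P] i) 0)) = _
    rw [relu_layer N hN ht.1 hP]
    obtain ⟨hg01, hgle, hstar⟩ := gB_props N hN ht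
    have harg : (N : ℝ) ^ 2 * (P + t - BN N t) - gN N t
        = (N : ℝ) ^ 2 * P + ((N : ℝ) * t) ^ 2 - (gN N t) ^ 2 := by
      rw [hstar]
      field_simp
      ring
    have harg0 : 0 ≤ (N : ℝ) ^ 2 * (P + t - BN N t) - gN N t := by
      rw [harg]
      nlinarith [hg01.1, hgle, mul_self_le_mul_self hg01.1 hgle]
    rw [hψ (gN N t) hg01 _ harg0]
    simp only [FN]
    rw [show 2 * (s+1) = 2 * s + 2 by ring, pow_add]
    field_simp
    ring

end Aux

/-- Lemma 5.2: ReLU FNNs of width `9N` and depth `L` approximate `xy` on `[0,1]²`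
within `6 N^{-L}`. -/
theorem relu_approx_product_unit
    (N L : ℕ) (hN : 0 < N) (hL : 0 < L) :
    ∃ φ : ℝ → ℝ → ℝ,
      ImplementedBy2 (9 * (N : ℝ)) (L : ℝ) φ ∧
      ∀ x ∈ Set.Icc (0 : ℝ) 1, ∀ y ∈ Set.Icc (0 : ℝ) 1,
        |φ x y - x * y| ≤ 6 * (N : ℝ) ^ (-(L : ℝ)) := by
  have hN0 : (0 : ℝ) < N := Nat.cast_pos.2 hN
  obtain ⟨ψ, hψnet, hψ⟩ := sc2 N hN L
  set c : ℝ := ((N : ℝ) ^ (2 * L))⁻¹ with hc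
  have hcN : c * (N : ℝ) ^ (2 * L) = 1 := inv_mul_cancel₀ (by positivity)
  -- the three affine embeddings
  have hEm : IsAffineMap 2 2 (fun x : Fin 2 → ℝ => ![(1/2) * (x 0 + x 1), (0:ℝ)]) := by
    refine isAffine_of_coords _ fun i => ?_
    fin_cases i
    · simpa using SAff.smul (1/2) ((SAff.coord 2 0).add (SAff.coord 2 1))
    · simpa using SAff.const 2 0
  have hEx : IsAffineMap 2 2 (fun x : Fin 2 → ℝ => ![x 0, (0:ℝ)]) := by
    refine isAffine_of_coords _ fun i => ?_
    fin_cases i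
    · simpa using SAff.coord 2 0
    · simpa using SAff.const 2 0
  have hEy : IsAffineMap 2 2 (fun x : Fin 2 → ℝ => ![x 1, (0:ℝ)]) := by
    refine isAffine_of_coords _ fun i => ?_
    fin_cases i
    · simpa using SAff.coord 2 1
    · simpa using SAff.const 2 0
  have net1 := (hψnet.pre hEm).smul (2 * c)
  have net2 := (hψnet.pre hEx).smul (-(c/2))
  have net3 := (hψnet.pre hEy).smul (-(c/2))
  have netsum := net1.add (net2.add net3)
  have netfinal := netsum.mono (W' := 9 * (N : ℝ))
    (by
      have h1N : (1:ℝ) ≤ (N:ℝ) := Nat.one_le_cast.2 hN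
      linarith)
  set h : (Fin 2 → ℝ) → ℝ := fun x =>
    2 * c * ψ ![(1/2) * (x 0 + x 1), (0:ℝ)] +
      (-(c/2) * ψ ![x 0, (0:ℝ)] + -(c/2) * ψ ![x 1, (0:ℝ)]) with hh
  refine ⟨fun a b => h ![a, b], ⟨L, le_refl _, ?_⟩, ?_⟩
  · have hvec : ∀ x : Fin 2 → ℝ, (![x 0, x 1] : Fin 2 → ℝ) = x := by
      intro x; funext i; fin_cases i <;> rfl
    have : (fun x : Fin 2 → ℝ => h ![x 0, x 1]) = h := by
      funext x; rw [hvec]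
    rw [this]
    exact netfinal
  · intro a ha b hb
    have hm : (1/2) * (a + b) ∈ Set.Icc (0:ℝ) 1 := by
      constructor <;> [linarith [ha.1, hb.1]; linarith [ha.2, hb.2]]
    have hval : h ![a, b] = 2 * FN N L ((1/2)*(a+b)) - FN N L a / 2 - FN N L b / 2 := by
      have e1 := hψ ((1/2)*(a+b)) hm 0 le_rfl
      have e2 := hψ a ha 0 le_rfl
      have e3 := hψ b hb 0 le_rfl
      simp only [hh, Matrix.cons_val_zero, Matrix.cons_val_one, Matrix.head_cons]
      rw [e1, e2, e3]
      have : ∀ r : ℝ, c * ((N:ℝ)^(2*L) * r) = r := by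
        intro r; rw [← mul_assoc, hcN, one_mul]
      nlinarith [this (0 + FN N L ((1/2)*(a+b))), this (0 + FN N L a), this (0 + FN N L b)]
    have hrpow : (N : ℝ) ^ (-(L : ℝ)) = ((N : ℝ) ^ L)⁻¹ := by
      rw [Real.rpow_neg (le_of_lt hN0), Real.rpow_natCast]
    set X : ℝ := (N : ℝ) ^ L with hX
    have hX1 : (1:ℝ) ≤ X := one_le_pow₀ (by exact_mod_cast hN)
    have hX0 : (0:ℝ) < X := by linarith
    have h2L : (N : ℝ) ^ (2 * L) = X ^ 2 := by
      rw [hX, ← pow_mul]; ring_nf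
    have hEX : 1 / (4 * (N:ℝ) ^ (2*L)) ≤ X⁻¹ := by
      rw [h2L, inv_eq_one_div]
      apply one_div_le_one_div_of_le hX0
      nlinarith
    obtain ⟨hm1, hm2⟩ := Fbound N hN L _ hm
    obtain ⟨ha1, ha2⟩ := Fbound N hN L a ha
    obtain ⟨hb1, hb2⟩ := Fbound N hN L b hb
    have key : h ![a, b] - a * b =
        2 * (FN N L ((1/2)*(a+b)) - ((1/2)*(a+b))^2) - (FN N L a - a^2)/2 - (FN N L b - b^2)/2 := by
      rw [hval]; ring
    have hXinv : (0:ℝ) ≤ X⁻¹ := by positivity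
    rw [hrpow, key, abs_le]
    constructor
    · nlinarith [hm2.trans hEX, ha2.trans hEX, hb2.trans hEX]
    · nlinarith [hm2.trans hEX, ha2.trans hEX, hb2.trans hEX]
end
end
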